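/- Let k^{abc} be a Killing 3-tensor on ℝ^n, and let t^a = g_{rs} k^{ars} denote its g-trace vector field. Then the following identities hold: (i) ∂_r k^{rab} = −(1/2)(∂^a t^b + ∂^b t^a); (ii) the divergence of the trace vanishes, ∂_r t^r = 0; (iii) ∂_r ∂_s k^{rsa} = −(1/2) Δ t^a, where Δ = g^{bc}∂_b∂_c acts componentwise. -/

import Mathlib

/-!
Contract the Killing equation `∂^{(r} k^{sab)} = 0` with `g_{rs}`: two of its four terms lower to
the divergence `∂_r k^{rab}` and, by the symmetry of `k`, the other two are `∂^a t^b` and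
`∂^b t^a`; this is (i). Contracting (i) with `g_{ab}` gives `∂_r t^r = -∂_r t^r`, hence (ii).
Taking the divergence of (i) and commuting partial derivatives turns its second term into
`∂^a (∂_s t^s)`, which vanishes by (ii), and leaves (iii).
-/

noncomputable section

/-- Partial derivative `∂_a f` in the `a`-th coordinate direction on `ℝⁿ`. -/
def pd {n : ℕ} (a : Fin n) (f : (Fin n → ℝ) → ℝ) : (Fin n → ℝ) → ℝ :=
  fun x => fderiv ℝ f x (Pi.single a 1)

/-- Raised partial derivative `∂^a f = g^{ab} ∂_b f`. -/
def pdUp {n : ℕ} (ginv : Matrix (Fin n) (Fin n) ℝ) (a : Fin n)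
    (f : (Fin n → ℝ) → ℝ) : (Fin n → ℝ) → ℝ :=
  fun x => ∑ b, ginv a b * pd b f x

/-- Laplace operator `Δ f = g^{ab} ∂_a ∂_b f`. -/
def lap {n : ℕ} (ginv : Matrix (Fin n) (Fin n) ℝ) (f : (Fin n → ℝ) → ℝ) :
    (Fin n → ℝ) → ℝ :=
  fun x => ∑ a, ∑ b, ginv a b * pd a (pd b f) x

/-- Iterated partial derivative `∂_{i 0} ⋯ ∂_{i (m-1)} f` along a tuple of indices. -/
def pdIter {n : ℕ} : (m : ℕ) → (Fin m → Fin n) → ((Fin n → ℝ) → ℝ) → ((Fin n → ℝ) → ℝ)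
  | 0, _, f => f
  | m + 1, i, f => pd (i 0) (pdIter m (fun j => i j.succ) f)

/-- A (smooth, totally symmetric) Killing `ℓ`-tensor: `∂^{(a₀} k^{a₁…a_ℓ)} = 0`. -/
def IsKillingTensor {n : ℕ} (ginv : Matrix (Fin n) (Fin n) ℝ) (ℓ : ℕ)
    (k : (Fin ℓ → Fin n) → (Fin n → ℝ) → ℝ) : Prop :=
  (∀ i, ContDiff ℝ (⊤ : ℕ∞) (k i)) ∧
  (∀ (σ : Equiv.Perm (Fin ℓ)) (i : Fin ℓ → Fin n), k (i ∘ σ) = k i) ∧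
  (∀ (i : Fin (ℓ + 1) → Fin n) (x : Fin n → ℝ),
    ∑ σ : Equiv.Perm (Fin (ℓ + 1)),
      pdUp ginv (i (σ 0)) (k (fun j => i (σ j.succ))) x = 0)

end

open Finset Matrix

section PartialDerivatives

variable {n : ℕ} {f : (Fin n → ℝ) → ℝ} {x : Fin n → ℝ}

theorem pd_fun_sum {ι : Type*} (a : Fin n) (s : Finset ι) {F : ι → (Fin n → ℝ) → ℝ}
    (hF : ∀ i ∈ s, DifferentiableAt ℝ (F i) x) :
    pd a (fun y => ∑ i ∈ s, F i y) x = ∑ i ∈ s, pd a (F i) x := by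
  simp [pd, fderiv_fun_sum hF]

theorem pd_const_mul (a : Fin n) (c : ℝ) (hf : DifferentiableAt ℝ f x) :
    pd a (fun y => c * f y) x = c * pd a f x := by
  simp [pd, fderiv_const_mul hf]

theorem pd_fun_add (a : Fin n) {f₁ f₂ : (Fin n → ℝ) → ℝ} (hf₁ : DifferentiableAt ℝ f₁ x)
    (hf₂ : DifferentiableAt ℝ f₂ x) :
    pd a (fun y => f₁ y + f₂ y) x = pd a f₁ x + pd a f₂ x := by
  simp [pd, fderiv_fun_add hf₁ hf₂]

theorem pd_sum_const_mul {ι : Type*} (a : Fin n) (s : Finset ι) (c : ι → ℝ)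
    {F : ι → (Fin n → ℝ) → ℝ} (hF : ∀ i ∈ s, DifferentiableAt ℝ (F i) x) :
    pd a (fun y => ∑ i ∈ s, c i * F i y) x = ∑ i ∈ s, c i * pd a (F i) x := by
  rw [pd_fun_sum a s fun i hi => (hF i hi).const_mul (c i)]
  exact sum_congr rfl fun i hi => pd_const_mul a (c i) (hF i hi)

theorem contDiff_pd {m : WithTop ℕ∞} (a : Fin n) (hf : ContDiff ℝ (m + 1) f) :
    ContDiff ℝ m (pd a f) :=
  (hf.fderiv_right le_rfl).clm_apply contDiff_const

theorem differentiable_pd (a : Fin n) (hf : ContDiff ℝ 2 f) : Differentiable ℝ (pd a f) :=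
  (contDiff_pd (m := 1) a hf).differentiable one_ne_zero

theorem pd_comm (a b : Fin n) (hf : ContDiff ℝ 2 f) (x : Fin n → ℝ) :
    pd a (pd b f) x = pd b (pd a f) x := by
  have hdf : Differentiable ℝ (fderiv ℝ f) := (hf.fderiv_right le_rfl).differentiable one_ne_zero
  have hpd : ∀ v w : Fin n → ℝ,
      fderiv ℝ (fun y => fderiv ℝ f y w) x v = fderiv ℝ (fderiv ℝ f) x v w := by
    intro v w
    simp [fderiv_clm_apply (hdf x) (differentiableAt_const w)]
  unfold pd
  rw [hpd, hpd]
  exact hf.contDiffAt.isSymmSndFDerivAt (by simp) _ _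

end PartialDerivatives

section RaisedDerivatives

variable {n : ℕ} {f : (Fin n → ℝ) → ℝ} {x : Fin n → ℝ}

theorem contDiff_pdUp {m : WithTop ℕ∞} (ginv : Matrix (Fin n) (Fin n) ℝ) (a : Fin n)
    (hf : ContDiff ℝ (m + 1) f) : ContDiff ℝ m (pdUp ginv a f) :=
  ContDiff.sum fun b _ => contDiff_const.mul (contDiff_pd b hf)

theorem pdUp_sum_const_mul {ι : Type*} (ginv : Matrix (Fin n) (Fin n) ℝ) (a : Fin n)
    (s : Finset ι) (c : ι → ℝ) {F : ι → (Fin n → ℝ) → ℝ}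
    (hF : ∀ i ∈ s, DifferentiableAt ℝ (F i) x) :
    pdUp ginv a (fun y => ∑ i ∈ s, c i * F i y) x = ∑ i ∈ s, c i * pdUp ginv a (F i) x := by
  simp only [pdUp, pd_sum_const_mul _ s c hF, mul_sum]
  rw [sum_comm]
  exact sum_congr rfl fun i _ => sum_congr rfl fun b _ => mul_left_comm _ _ _

theorem pd_pdUp (ginv : Matrix (Fin n) (Fin n) ℝ) (a b : Fin n)
    (hf : ∀ u, DifferentiableAt ℝ (pd u f) x) :
    pd b (pdUp ginv a f) x = ∑ u, ginv a u * pd b (pd u f) x :=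
  pd_sum_const_mul b univ (ginv a) fun u _ => hf u

theorem sum_pd_pdUp_eq_lap (ginv : Matrix (Fin n) (Fin n) ℝ)
    (hf : ∀ u, DifferentiableAt ℝ (pd u f) x) :
    ∑ s, pd s (pdUp ginv s f) x = lap ginv f x :=
  sum_congr rfl fun s _ => pd_pdUp ginv s s hf

theorem sum_pd_pdUp_eq_pdUp_sum_pd (ginv : Matrix (Fin n) (Fin n) ℝ) (a : Fin n)
    {F : Fin n → (Fin n → ℝ) → ℝ} (hF : ∀ s, ContDiff ℝ 2 (F s)) :
    ∑ s, pd s (pdUp ginv a (F s)) x = pdUp ginv a (fun y => ∑ s, pd s (F s) y) x := by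
  simp only [pd_pdUp ginv a _ fun u => differentiable_pd u (hF _) x]
  rw [sum_comm]
  refine sum_congr rfl fun u _ => ?_
  rw [← mul_sum, pd_fun_sum u univ fun s _ => differentiable_pd s (hF s) x]
  simp only [pd_comm _ u (hF _)]

theorem sum_mul_pdUp {g ginv : Matrix (Fin n) (Fin n) ℝ} (hginv : g * ginv = 1) (s : Fin n)
    (f : (Fin n → ℝ) → ℝ) (x : Fin n → ℝ) :
    ∑ r, g s r * pdUp ginv r f x = pd s f x := by
  change (g *ᵥ ginv *ᵥ fun b => pd b f x) s = pd s f x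
  rw [mulVec_mulVec, hginv, one_mulVec]

theorem sum_sum_mul_pdUp_left {g ginv : Matrix (Fin n) (Fin n) ℝ} (hgsym : g.IsSymm)
    (hginv : g * ginv = 1) (F : Fin n → (Fin n → ℝ) → ℝ) (x : Fin n → ℝ) :
    ∑ r, ∑ s, g r s * pdUp ginv r (F s) x = ∑ s, pd s (F s) x := by
  rw [sum_comm]
  refine sum_congr rfl fun s _ => ?_
  simp only [hgsym.apply s]
  exact sum_mul_pdUp hginv s (F s) x

theorem sum_sum_mul_pdUp_right {g ginv : Matrix (Fin n) (Fin n) ℝ} (hginv : g * ginv = 1)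
    (F : Fin n → (Fin n → ℝ) → ℝ) (x : Fin n → ℝ) :
    ∑ r, ∑ s, g r s * pdUp ginv s (F r) x = ∑ r, pd r (F r) x :=
  sum_congr rfl fun r _ => sum_mul_pdUp hginv r (F r) x

end RaisedDerivatives

section KillingThreeTensor

variable {n : ℕ} {g ginv : Matrix (Fin n) (Fin n) ℝ}
  {k : Fin n → Fin n → Fin n → (Fin n → ℝ) → ℝ} {t : Fin n → (Fin n → ℝ) → ℝ}

theorem trace_eq_sum_prod (ht : ∀ (a : Fin n) (y : Fin n → ℝ), t a y = ∑ r, ∑ s, g r s * k a r s y)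
    (a : Fin n) : t a = fun y => ∑ p : Fin n × Fin n, g p.1 p.2 * k a p.1 p.2 y :=
  funext fun y => by rw [ht]; exact (Fintype.sum_prod_type' fun r s => g r s * k a r s y).symm

theorem contDiff_trace {m : WithTop ℕ∞} (hk : ∀ a b c, ContDiff ℝ m (k a b c))
    (ht : ∀ (a : Fin n) (y : Fin n → ℝ), t a y = ∑ r, ∑ s, g r s * k a r s y) (a : Fin n) :
    ContDiff ℝ m (t a) := by
  rw [trace_eq_sum_prod ht]
  exact ContDiff.sum fun p _ => contDiff_const.mul (hk _ _ _)

theorem pd_trace (hk : ∀ a b c, Differentiable ℝ (k a b c))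
    (ht : ∀ (a : Fin n) (y : Fin n → ℝ), t a y = ∑ r, ∑ s, g r s * k a r s y)
    (u a : Fin n) (x : Fin n → ℝ) :
    pd u (t a) x = ∑ r, ∑ s, g r s * pd u (k a r s) x := by
  rw [trace_eq_sum_prod ht, pd_sum_const_mul _ _ _ fun p _ => (hk _ _ _) x]
  exact Fintype.sum_prod_type' fun r s => g r s * pd u (k a r s) x

theorem pdUp_trace (hk : ∀ a b c, Differentiable ℝ (k a b c))
    (ht : ∀ (a : Fin n) (y : Fin n → ℝ), t a y = ∑ r, ∑ s, g r s * k a r s y)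
    (u a : Fin n) (x : Fin n → ℝ) :
    pdUp ginv u (t a) x = ∑ r, ∑ s, g r s * pdUp ginv u (k a r s) x := by
  rw [trace_eq_sum_prod ht, pdUp_sum_const_mul _ _ _ _ fun p _ => (hk _ _ _) x]
  exact Fintype.sum_prod_type' fun r s => g r s * pdUp ginv u (k a r s) x

theorem sum_pd_killing_eq (hgsym : g.IsSymm) (hginv : g * ginv = 1)
    (hk : ∀ a b c, Differentiable ℝ (k a b c)) (hcyc : ∀ a b c, k a b c = k b c a)
    (hkill : ∀ (a b c d : Fin n) (x : Fin n → ℝ),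
      pdUp ginv a (k b c d) x + pdUp ginv b (k a c d) x +
        pdUp ginv c (k a b d) x + pdUp ginv d (k a b c) x = 0)
    (ht : ∀ (a : Fin n) (y : Fin n → ℝ), t a y = ∑ r, ∑ s, g r s * k a r s y)
    (a b : Fin n) (x : Fin n → ℝ) :
    ∑ r, pd r (k r a b) x = -(1/2) * (pdUp ginv a (t b) x + pdUp ginv b (t a) x) := by
  have hcontr : ∑ r, ∑ s, g r s * (pdUp ginv r (k s a b) x + pdUp ginv s (k r a b) x +
      pdUp ginv a (k r s b) x + pdUp ginv b (k r s a) x) = 0 := by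
    simp only [hkill, mul_zero, sum_const_zero]
  have htrace : ∀ c d, ∑ r, ∑ s, g r s * pdUp ginv c (k r s d) x = pdUp ginv c (t d) x := by
    intro c d
    simp only [pdUp_trace hk ht, hcyc d]
  simp only [mul_add, sum_add_distrib, sum_sum_mul_pdUp_left hgsym hginv,
    sum_sum_mul_pdUp_right hginv, htrace] at hcontr
  linarith

theorem sum_pd_trace_eq_zero (hgsym : g.IsSymm) (hginv : g * ginv = 1)
    (hk : ∀ a b c, Differentiable ℝ (k a b c))
    (ht : ∀ (a : Fin n) (y : Fin n → ℝ), t a y = ∑ r, ∑ s, g r s * k a r s y)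
    (hdiv : ∀ (a b : Fin n) (x : Fin n → ℝ),
      ∑ r, pd r (k r a b) x = -(1/2) * (pdUp ginv a (t b) x + pdUp ginv b (t a) x))
    (x : Fin n → ℝ) :
    ∑ r, pd r (t r) x = 0 := by
  have h : ∑ r, pd r (t r) x = -(1/2) * (∑ b, pd b (t b) x + ∑ a, pd a (t a) x) :=
    calc ∑ r, pd r (t r) x = ∑ a, ∑ b, g a b * ∑ r, pd r (k r a b) x := by
          simp only [pd_trace hk ht, mul_sum]
          rw [sum_comm]
          exact sum_congr rfl fun a _ => sum_comm
      _ = ∑ a, ∑ b, g a b * (-(1/2) * (pdUp ginv a (t b) x + pdUp ginv b (t a) x)) := by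
          simp only [hdiv]
      _ = -(1/2) * (∑ b, pd b (t b) x + ∑ a, pd a (t a) x) := by
          simp only [mul_add, mul_left_comm _ (-(1/2) : ℝ), ← mul_sum, sum_add_distrib,
            sum_sum_mul_pdUp_left hgsym hginv, sum_sum_mul_pdUp_right hginv]
  linarith

theorem sum_pd_pd_killing_eq (hk : ∀ a b c, ContDiff ℝ 2 (k a b c))
    (htc : ∀ a, ContDiff ℝ 2 (t a))
    (hdiv : ∀ (a b : Fin n) (x : Fin n → ℝ),
      ∑ r, pd r (k r a b) x = -(1/2) * (pdUp ginv a (t b) x + pdUp ginv b (t a) x))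
    (htdiv : ∀ x, ∑ r, pd r (t r) x = 0) (a : Fin n) (x : Fin n → ℝ) :
    ∑ r, ∑ s, pd r (pd s (k r s a)) x = -(1/2) * lap ginv (t a) x := by
  have hdpdUp : ∀ b c, Differentiable ℝ (pdUp ginv b (t c)) := fun b c =>
    (contDiff_pdUp (m := 1) ginv b (htc c)).differentiable one_ne_zero
  calc ∑ r, ∑ s, pd r (pd s (k r s a)) x = ∑ s, pd s (fun y => ∑ r, pd r (k r s a) y) x := by
        rw [sum_comm]
        refine sum_congr rfl fun s _ => ?_
        rw [pd_fun_sum s univ fun r _ => differentiable_pd r (hk r s a) x]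
        exact sum_congr rfl fun r _ => pd_comm r s (hk r s a) x
    _ = ∑ s, pd s (fun y => -(1/2) * (pdUp ginv s (t a) y + pdUp ginv a (t s) y)) x := by
        simp only [hdiv]
    _ = -(1/2) * (∑ s, pd s (pdUp ginv s (t a)) x + ∑ s, pd s (pdUp ginv a (t s)) x) := by
        rw [← sum_add_distrib, mul_sum]
        refine sum_congr rfl fun s _ => ?_
        rw [pd_const_mul _ _ (((hdpdUp s a).fun_add (hdpdUp a s)) x),
          pd_fun_add _ ((hdpdUp s a) x) ((hdpdUp a s) x)]
    _ = -(1/2) * lap ginv (t a) x := by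
        rw [sum_pd_pdUp_eq_lap ginv fun u => differentiable_pd u (htc a) x,
          sum_pd_pdUp_eq_pdUp_sum_pd ginv a htc, funext htdiv]
        simp [pdUp, pd]

end KillingThreeTensor

theorem stmt14_general {n : ℕ}
    (g ginv : Matrix (Fin n) (Fin n) ℝ) (hgsym : g.IsSymm) (hginv : g * ginv = 1)
    (k : Fin n → Fin n → Fin n → (Fin n → ℝ) → ℝ)
    (hsmooth : ∀ a b c, ContDiff ℝ (⊤ : ℕ∞) (k a b c))
    (hsymk : ∀ (a b c : Fin n) (σ : Equiv.Perm (Fin 3)),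
      k (![a, b, c] (σ 0)) (![a, b, c] (σ 1)) (![a, b, c] (σ 2)) = k a b c)
    (hkill : ∀ (a b c d : Fin n) (x : Fin n → ℝ),
      pdUp ginv a (k b c d) x + pdUp ginv b (k a c d) x +
        pdUp ginv c (k a b d) x + pdUp ginv d (k a b c) x = 0)
    (t : Fin n → (Fin n → ℝ) → ℝ)
    (ht : ∀ (a : Fin n) (y : Fin n → ℝ), t a y = ∑ r, ∑ s, g r s * k a r s y) :
    (∀ (a b : Fin n) (x : Fin n → ℝ),
      (∑ r, pd r (k r a b) x) = -(1/2) * (pdUp ginv a (t b) x + pdUp ginv b (t a) x)) ∧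
    (∀ x : Fin n → ℝ, (∑ r, pd r (t r) x) = 0) ∧
    (∀ (a : Fin n) (x : Fin n → ℝ),
      (∑ r, ∑ s, pd r (pd s (k r s a)) x) = -(1/2) * lap ginv (t a) x) := by
  have hk : ∀ a b c, ContDiff ℝ 2 (k a b c) := fun a b c =>
    (hsmooth a b c).of_le (WithTop.coe_le_coe.2 le_top)
  have hdk : ∀ a b c, Differentiable ℝ (k a b c) := fun a b c =>
    (hk a b c).differentiable two_ne_zero
  have hcyc : ∀ a b c, k a b c = k b c a := fun a b c => by
    simpa using (hsymk a b c (finRotate 3)).symm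
  have hdiv := sum_pd_killing_eq hgsym hginv hdk hcyc hkill ht
  have htdiv := sum_pd_trace_eq_zero hgsym hginv hdk ht hdiv
  exact ⟨hdiv, htdiv, sum_pd_pd_killing_eq hk (contDiff_trace hk ht) hdiv htdiv⟩

/-- for a Killing 3-tensor `k` on `ℝⁿ` with trace vector field
`t^a = g_{rs} k^{ars}`: (i) `∂_r k^{rab} = -(1/2)(∂^a t^b + ∂^b t^a)`;
(ii) `∂_r t^r = 0`; (iii) `∂_r ∂_s k^{rsa} = -(1/2) Δ t^a`. -/
theorem stmt14 {n : ℕ} (hn : 0 < n)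
    (g ginv : Matrix (Fin n) (Fin n) ℝ) (hgsym : g.IsSymm) (hginv : g * ginv = 1)
    (k : Fin n → Fin n → Fin n → (Fin n → ℝ) → ℝ)
    (hsmooth : ∀ a b c, ContDiff ℝ (⊤ : ℕ∞) (k a b c))
    (hsymk : ∀ (a b c : Fin n) (σ : Equiv.Perm (Fin 3)),
      k (![a, b, c] (σ 0)) (![a, b, c] (σ 1)) (![a, b, c] (σ 2)) = k a b c)
    (hkill : ∀ (a b c d : Fin n) (x : Fin n → ℝ),
      pdUp ginv a (k b c d) x + pdUp ginv b (k a c d) x +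
        pdUp ginv c (k a b d) x + pdUp ginv d (k a b c) x = 0)
    (t : Fin n → (Fin n → ℝ) → ℝ)
    (ht : ∀ (a : Fin n) (y : Fin n → ℝ), t a y = ∑ r, ∑ s, g r s * k a r s y) :
    (∀ (a b : Fin n) (x : Fin n → ℝ),
      (∑ r, pd r (k r a b) x) = -(1/2) * (pdUp ginv a (t b) x + pdUp ginv b (t a) x)) ∧
    (∀ x : Fin n → ℝ, (∑ r, pd r (t r) x) = 0) ∧
    (∀ (a : Fin n) (x : Fin n → ℝ),
      (∑ r, ∑ s, pd r (pd s (k r s a)) x) = -(1/2) * lap ginv (t a) x) :=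
  stmt14_general g ginv hgsym hginv k hsmooth hsymk hkill t ht
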